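/- Let q, α, β, x, y, t be complex numbers with |q| < 1, |xt| < 1, and |yt| < 1. Then Σ_{n=0}^{∞} Φ_n^{(α,β)}(x,y|q) t^n / (q;q)_n = (α x t;q)_∞ (β y t;q)_∞ / ((x t;q)_∞ (y t;q)_∞), the series converging absolutely. -/

import Mathlib

/-- Finite q-Pochhammer symbol `(a;q)_n`. -/
noncomputable def qp (q a : ℂ) (n : ℕ) : ℂ := ∏ k ∈ Finset.range n, (1 - a * q ^ k)

/-- Infinite q-Pochhammer symbol `(a;q)_∞`. -/
noncomputable def qpi (q a : ℂ) : ℂ := ∏' k : ℕ, (1 - a * q ^ k)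

/-- Real finite q-Pochhammer symbol. -/
noncomputable def qpR (q a : ℝ) (n : ℕ) : ℝ := ∏ k ∈ Finset.range n, (1 - a * q ^ k)

/-- The q-functions `C_n^{(α,β)}(e^{iθ};q)`; for `α = β` these are the continuous
q-ultraspherical polynomials `C_n(cos θ; β | q)`. -/
noncomputable def Cab (q α β : ℂ) (n : ℕ) (θ : ℝ) : ℂ :=
  ∑ k ∈ Finset.range (n + 1),
    qp q α k * qp q β (n - k) / (qp q q k * qp q q (n - k)) *
      Complex.exp (Complex.I * ((n : ℂ) - 2 * (k : ℂ)) * (θ : ℂ))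

/-- The weight function `ω^{(α,β)}(cos θ | q)`; for `α = β` this is `ω_β(cos θ | q)`. -/
noncomputable def wab (q α β : ℂ) (θ : ℝ) : ℂ :=
  qpi q (Complex.exp (2 * Complex.I * (θ : ℂ))) *
      qpi q (Complex.exp (-(2 * Complex.I * (θ : ℂ)))) /
    (qpi q (α * Complex.exp (2 * Complex.I * (θ : ℂ))) *
      qpi q (β * Complex.exp (-(2 * Complex.I * (θ : ℂ)))))

/-- The normalization constant `h_n(β|q)`. -/
noncomputable def hcst (q β : ℂ) (n : ℕ) : ℂ :=
  qpi q q * qpi q (β ^ 2) * qp q q n * (1 - β * q ^ n) /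
    (2 * (Real.pi : ℂ) * (qpi q β * qpi q (β * q) * qp q (β ^ 2) n * (1 - β)))

/-- The homogeneous polynomials `Φ_n^{(a,b)}(x, y | q)`. -/
noncomputable def Phi (q a b : ℂ) (n : ℕ) (x y : ℂ) : ℂ :=
  ∑ k ∈ Finset.range (n + 1),
    qp q q n / (qp q q k * qp q q (n - k)) * qp q a k * qp q b (n - k) * x ^ k * y ^ (n - k)

/-- The Jackson q-integral `∫_a^b f(z) d_q z`. -/
noncomputable def jackson (q a b : ℂ) (f : ℂ → ℂ) : ℂ :=
  (1 - q) * b * ∑' n : ℕ, q ^ n * f (b * q ^ n) -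
    (1 - q) * a * ∑' n : ℕ, q ^ n * f (a * q ^ n)

/-!
`Φ_n^{(α,β)}(x,y|q) tⁿ / (q;q)_n` is the `n`-th coefficient of the Cauchy product of the
q-binomial series `F_α(xt)` and `F_β(yt)`, where `F_a(z) = ∑ (a;q)_n / (q;q)_n zⁿ` converges
absolutely for `|z| < 1` by the ratio test. The q-binomial theorem
`F_a(z) (z;q)_∞ = (az;q)_∞` comes from iterating the functional equation
`(1 - z) F_a(z) = (1 - az) F_a(qz)` to `F_a(z) (z;q)_n = (az;q)_n F_a(qⁿz)` and letting
`n → ∞`, where `F_a(qⁿz) → F_a(0) = 1` by dominated convergence.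
-/

open Filter Finset Topology

noncomputable def qBinomCoeff (q a : ℂ) (n : ℕ) : ℂ := qp q a n / qp q q n

/-- The q-binomial series `₁φ₀(a; –; q, z)`. -/
noncomputable def qBinomSeries (q a z : ℂ) : ℂ := ∑' n : ℕ, qBinomCoeff q a n * z ^ n

variable {q : ℂ}

lemma one_sub_ne_zero_of_norm_lt_one {w : ℂ} (hw : ‖w‖ < 1) : 1 - w ≠ 0 :=
  sub_ne_zero.2 fun h => by simp [← h] at hw

lemma norm_mul_pow_le (hq : ‖q‖ ≤ 1) (z : ℂ) (k : ℕ) : ‖z * q ^ k‖ ≤ ‖z‖ := by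
  rw [norm_mul, norm_pow]
  exact mul_le_of_le_one_right (norm_nonneg z) (pow_le_one₀ (norm_nonneg q) hq)

lemma one_sub_mul_pow_ne_zero (hq : ‖q‖ < 1) {z : ℂ} (hz : ‖z‖ < 1) (k : ℕ) :
    1 - z * q ^ k ≠ 0 :=
  one_sub_ne_zero_of_norm_lt_one ((norm_mul_pow_le hq.le z k).trans_lt hz)

lemma qp_succ (q a : ℂ) (n : ℕ) : qp q a (n + 1) = qp q a n * (1 - a * q ^ n) :=
  prod_range_succ _ n

lemma qp_self_ne_zero (hq : ‖q‖ < 1) (n : ℕ) : qp q q n ≠ 0 :=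
  prod_ne_zero_iff.2 fun k _ => one_sub_mul_pow_ne_zero hq hq k

lemma qBinomCoeff_zero (q a : ℂ) : qBinomCoeff q a 0 = 1 := by
  simp [qBinomCoeff, qp]

lemma qBinomCoeff_succ_mul (hq : ‖q‖ < 1) (a : ℂ) (n : ℕ) :
    qBinomCoeff q a (n + 1) * (1 - q ^ (n + 1)) = qBinomCoeff q a n * (1 - a * q ^ n) := by
  have hqn : 1 - q ^ (n + 1) ≠ 0 := by simpa [pow_succ'] using one_sub_mul_pow_ne_zero hq hq n
  have hqq := qp_self_ne_zero hq n
  simp only [qBinomCoeff, qp_succ, ← pow_succ']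
  field_simp

lemma summable_norm_qBinomCoeff_mul_pow (hq : ‖q‖ < 1) (a : ℂ) {z : ℂ} (hz : ‖z‖ < 1) :
    Summable fun n : ℕ => ‖qBinomCoeff q a n * z ^ n‖ := by
  let ρ : ℕ → ℂ := fun n => (1 - a * q ^ n) * z / (1 - q ^ (n + 1))
  have hratio (n : ℕ) :
      qBinomCoeff q a (n + 1) * z ^ (n + 1) = qBinomCoeff q a n * z ^ n * ρ n := by
    have hqn : 1 - q ^ (n + 1) ≠ 0 := by simpa [pow_succ'] using one_sub_mul_pow_ne_zero hq hq n
    rw [← mul_div_assoc, eq_div_iff hqn, pow_succ]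
    linear_combination z ^ n * z * qBinomCoeff_succ_mul hq a n
  have hq0 : Tendsto (fun n : ℕ => q ^ n) atTop (𝓝 0) :=
    tendsto_pow_atTop_nhds_zero_of_norm_lt_one hq
  have hρ : Tendsto ρ atTop (𝓝 z) := by
    have hnum : Tendsto (fun n => (1 - a * q ^ n) * z) atTop (𝓝 z) := by
      simpa using ((tendsto_const_nhds (x := (1 : ℂ))).sub (hq0.const_mul a)).mul_const z
    have hden : Tendsto (fun n => 1 - q ^ (n + 1)) atTop (𝓝 1) := by
      simpa [pow_succ'] using (tendsto_const_nhds (x := (1 : ℂ))).sub (hq0.const_mul q)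
    simpa [ρ, Pi.div_def] using hnum.div hden one_ne_zero
  have hzr : ‖z‖ < (1 + ‖z‖) / 2 := by linarith
  refine summable_of_ratio_norm_eventually_le (r := (1 + ‖z‖) / 2) (by linarith) ?_
  filter_upwards [hρ.norm.eventually (eventually_le_nhds hzr)] with n hn
  rw [norm_norm, norm_norm, hratio, norm_mul, mul_comm]
  exact mul_le_mul_of_nonneg_right hn (norm_nonneg _)

lemma qBinomSeries_zero (q a : ℂ) : qBinomSeries q a 0 = 1 := by
  rw [qBinomSeries, tsum_eq_single 0 fun n hn => by simp [zero_pow hn]]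
  simp [qBinomCoeff_zero]

lemma one_sub_mul_qBinomSeries (hq : ‖q‖ < 1) (a : ℂ) {z : ℂ} (hz : ‖z‖ < 1) :
    (1 - z) * qBinomSeries q a z = (1 - a * z) * qBinomSeries q a (q * z) := by
  have hqz : ‖q * z‖ < 1 := by simpa [mul_comm] using (norm_mul_pow_le hq.le z 1).trans_lt hz
  have hs := (summable_norm_qBinomCoeff_mul_pow hq a hz).of_norm
  have hs' := (summable_norm_qBinomCoeff_mul_pow hq a hqz).of_norm
  -- the factor `1 - qⁿ` of the difference kills its `n = 0` term, so the index can be shifted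
  have key : qBinomSeries q a z - qBinomSeries q a (q * z) =
      z * (qBinomSeries q a z - a * qBinomSeries q a (q * z)) := by
    rw [qBinomSeries, qBinomSeries, ← tsum_mul_left, ← hs.tsum_sub hs',
      ← hs.tsum_sub (hs'.mul_left a), ← tsum_mul_left, (hs.sub hs').tsum_eq_zero_add]
    simp only [pow_zero, sub_self, zero_add]
    refine tsum_congr fun n => ?_
    linear_combination z ^ (n + 1) * qBinomCoeff_succ_mul hq a n
  linear_combination key

lemma qBinomSeries_mul_qp (hq : ‖q‖ < 1) (a : ℂ) {z : ℂ} (hz : ‖z‖ < 1) (n : ℕ) :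
    qBinomSeries q a z * qp q z n = qp q (a * z) n * qBinomSeries q a (q ^ n * z) := by
  induction n with
  | zero => simp [qp]
  | succ n ih =>
    have hqnz : ‖q ^ n * z‖ < 1 := by
      simpa [mul_comm] using (norm_mul_pow_le hq.le z n).trans_lt hz
    have step := one_sub_mul_qBinomSeries hq a hqnz
    rw [← mul_assoc q, ← pow_succ'] at step
    rw [qp_succ, qp_succ, ← mul_assoc, ih]
    linear_combination qp q (a * z) n * step

lemma tendsto_qBinomSeries_pow_mul (hq : ‖q‖ < 1) (a : ℂ) {z : ℂ} (hz : ‖z‖ < 1) :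
    Tendsto (fun n : ℕ => qBinomSeries q a (q ^ n * z)) atTop (𝓝 1) := by
  have hq0 : Tendsto (fun n : ℕ => q ^ n * z) atTop (𝓝 0) := by
    simpa using (tendsto_pow_atTop_nhds_zero_of_norm_lt_one hq).mul_const z
  rw [← qBinomSeries_zero q a]
  refine tendsto_tsum_of_dominated_convergence (summable_norm_qBinomCoeff_mul_pow hq a hz)
    (fun k => (hq0.pow k).const_mul _) (Eventually.of_forall fun n k => ?_)
  rw [norm_mul, norm_mul, norm_pow, norm_pow]
  gcongr
  simpa [mul_comm] using norm_mul_pow_le hq.le z n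

lemma summable_norm_neg_mul_pow (hq : ‖q‖ < 1) (z : ℂ) :
    Summable fun k : ℕ => ‖-(z * q ^ k)‖ := by
  simpa [norm_mul] using (summable_norm_geometric_of_norm_lt_one hq).mul_left ‖z‖

lemma hasProd_qpi (hq : ‖q‖ < 1) (z : ℂ) : HasProd (fun k : ℕ => 1 - z * q ^ k) (qpi q z) := by
  simp only [qpi, sub_eq_add_neg]
  exact (multipliable_one_add_of_summable (summable_norm_neg_mul_pow hq z)).hasProd

lemma qpi_ne_zero (hq : ‖q‖ < 1) {z : ℂ} (hz : ‖z‖ < 1) : qpi q z ≠ 0 := by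
  simp only [qpi, sub_eq_add_neg]
  exact tprod_one_add_ne_zero_of_summable
    (fun k => by simpa [sub_eq_add_neg] using one_sub_mul_pow_ne_zero hq hz k)
    (summable_norm_neg_mul_pow hq z)

theorem qBinomSeries_mul_qpi (hq : ‖q‖ < 1) (a : ℂ) {z : ℂ} (hz : ‖z‖ < 1) :
    qBinomSeries q a z * qpi q z = qpi q (a * z) := by
  have hlhs := (hasProd_qpi hq z).tendsto_prod_nat.const_mul (qBinomSeries q a z)
  have hrhs := (hasProd_qpi hq (a * z)).tendsto_prod_nat.mul (tendsto_qBinomSeries_pow_mul hq a hz)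
  rw [mul_one] at hrhs
  exact tendsto_nhds_unique (hlhs.congr fun n => qBinomSeries_mul_qp hq a hz n) hrhs

lemma Phi_mul_pow_div_qp (hq : ‖q‖ < 1) (α β x y t : ℂ) (n : ℕ) :
    Phi q α β n x y * t ^ n / qp q q n = ∑ k ∈ range (n + 1),
      qBinomCoeff q α k * (x * t) ^ k * (qBinomCoeff q β (n - k) * (y * t) ^ (n - k)) := by
  rw [Phi, sum_mul, sum_div]
  refine sum_congr rfl fun k hk => ?_
  have ht : t ^ n = t ^ k * t ^ (n - k) := by
    rw [← pow_add, Nat.add_sub_cancel' (Nat.lt_succ_iff.mp (mem_range.mp hk))]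
  have := qp_self_ne_zero hq k
  have := qp_self_ne_zero hq (n - k)
  have := qp_self_ne_zero hq n
  rw [ht, qBinomCoeff, qBinomCoeff, mul_pow, mul_pow]
  field_simp

/-- Generating function for the homogeneous polynomials `Φ_n^{(α,β)}(x,y|q)`. -/
theorem stmt10 (q α β x y t : ℂ) (hq : ‖q‖ < 1) (hxt : ‖x * t‖ < 1)
    (hyt : ‖y * t‖ < 1) :
    Summable (fun n : ℕ => ‖Phi q α β n x y * t ^ n / qp q q n‖) ∧
    ∑' n : ℕ, Phi q α β n x y * t ^ n / qp q q n =
      qpi q (α * x * t) * qpi q (β * y * t) / (qpi q (x * t) * qpi q (y * t)) := by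
  have hα := summable_norm_qBinomCoeff_mul_pow hq α hxt
  have hβ := summable_norm_qBinomCoeff_mul_pow hq β hyt
  simp only [Phi_mul_pow_div_qp hq]
  have hsum := summable_norm_sum_mul_range_of_summable_norm hα hβ
  refine ⟨hsum, ?_⟩
  rw [← tsum_mul_tsum_eq_tsum_sum_range_of_summable_norm hα hβ,
    eq_div_iff (mul_ne_zero (qpi_ne_zero hq hxt) (qpi_ne_zero hq hyt)), mul_assoc α, mul_assoc β,
    ← qBinomSeries_mul_qpi hq α hxt, ← qBinomSeries_mul_qpi hq β hyt, qBinomSeries, qBinomSeries]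
  ring
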